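/- arXiv:2511.15850 — 2 statements merged into one kernel-verified Lean document; each statement's English description precedes it below -/
import Mathlib

section
/- Let a and b be integers with 2 ≤ a < b and a dividing b. Let (e_k) be a sequence of positive integers indexed by k ≥ 1 such that e_1 ≥ 1 and a^(e_k) > b^(e_{k-1}) for all k ≥ 2. If N is a positive integer divisible by a^(e_k) for some k ≥ 1, and N is not divisible by b, then the number of nonzero digits in the base-b expansion of N is at least k. -/
/-- Number of nonzero digits in the base-`b` expansion of `N`. -/
def countNonzeroDigits (b N : ℕ) : ℕ :=
  ((Nat.digits b N).filter (· ≠ 0)).length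

/-!
Induction on `k`. Put `m = e (k-1) ≥ 1` and split `N = q b^m + r` with `r = N mod b^m`.
As `a^m ∣ b^m` and `e` is increasing, `a^m ∣ r`, and `b ∤ r` since `b ∣ b^m`; so `r` has at
least `k - 1` nonzero digits. The base-`b` digits of `N` are those of `r`, padded to length `m`,
followed by those of `q`, and `q ≥ 1` because `N ≥ a^(e k) > b^m`.
-/

section CountNonzeroDigits

variable {b : ℕ}

lemma countNonzeroDigits_eq_mod_add_div (hb : 2 ≤ b) (n : ℕ) :
    countNonzeroDigits b n = (if n % b = 0 then 0 else 1) + countNonzeroDigits b (n / b) := by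
  rcases Nat.eq_zero_or_pos n with rfl | hn
  · simp [countNonzeroDigits]
  · unfold countNonzeroDigits
    rw [Nat.digits_def' (by omega) hn, List.filter_cons]
    split_ifs with h <;> simp_all [Nat.add_comm]

lemma one_le_countNonzeroDigits {n : ℕ} (hn : n ≠ 0) : 1 ≤ countNonzeroDigits b n :=
  List.length_pos_iff_exists_mem.mpr ⟨_, List.mem_filter.mpr
    ⟨List.getLast_mem _, by simpa using Nat.getLast_digit_ne_zero b hn⟩⟩

lemma countNonzeroDigits_mod_pow_add_div_pow (hb : 2 ≤ b) (m n : ℕ) :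
    countNonzeroDigits b (n % b ^ m) + countNonzeroDigits b (n / b ^ m) =
      countNonzeroDigits b n := by
  induction m generalizing n with
  | zero => simp [countNonzeroDigits, Nat.mod_one]
  | succ m ih =>
    have hmod : n % b ^ (m + 1) % b = n % b :=
      Nat.mod_mod_of_dvd n (dvd_pow_self b m.succ_ne_zero)
    have hmod_div : n % b ^ (m + 1) / b = n / b % b ^ m := by
      rw [pow_succ', Nat.mod_mul_right_div_self]
    have hdiv : n / b ^ (m + 1) = n / b / b ^ m := by
      rw [pow_succ', Nat.div_div_eq_div_mul]
    rw [countNonzeroDigits_eq_mod_add_div hb n, countNonzeroDigits_eq_mod_add_div hb,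
      hmod, hmod_div, hdiv, ← ih (n / b)]
    omega

lemma countNonzeroDigits_mod_pow_lt (hb : 2 ≤ b) {m n : ℕ} (h : b ^ m ≤ n) :
    countNonzeroDigits b (n % b ^ m) < countNonzeroDigits b n := by
  have hq : n / b ^ m ≠ 0 := (Nat.div_pos h (by positivity)).ne'
  rw [← countNonzeroDigits_mod_pow_add_div_pow hb m n]
  have := one_le_countNonzeroDigits (b := b) hq
  omega

end CountNonzeroDigits

theorem stmt_2_general (a b : ℕ) (ha : 2 ≤ a) (hab : a < b) (hdvd : a ∣ b)
    (e : ℕ → ℕ) (he1 : 1 ≤ e 1)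
    (hstep : ∀ k ≥ 2, a ^ e k > b ^ e (k - 1))
    (N : ℕ) (k : ℕ)
    (hNdvd : a ^ e k ∣ N) (hnd : ¬ (b ∣ N)) :
    countNonzeroDigits b N ≥ k := by
  have hb : 2 ≤ b := by omega
  induction k generalizing N with
  | zero => exact Nat.zero_le _
  | succ k ih =>
    have hN : N ≠ 0 := by rintro rfl; exact hnd (dvd_zero b)
    rcases Nat.eq_zero_or_pos k with rfl | hk
    · exact one_le_countNonzeroDigits hN
    have hlt : b ^ e k < a ^ e (k + 1) := hstep (k + 1) (by omega)
    have hek : e k ≠ 0 := by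
      rcases (show k = 1 ∨ 2 ≤ k by omega) with rfl | hk2
      · omega
      · intro h0
        have := hstep k hk2
        rw [h0, pow_zero] at this
        exact absurd this (not_lt.mpr (Nat.one_le_pow _ _ (by omega)))
    have hmono : e k ≤ e (k + 1) :=
      ((Nat.pow_lt_pow_iff_right (by omega)).mp
        ((Nat.pow_le_pow_left hab.le _).trans_lt hlt)).le
    have hrest := ih (N % b ^ e k)
      ((Nat.dvd_mod_iff (pow_dvd_pow_of_dvd hdvd _)).mpr ((pow_dvd_pow a hmono).trans hNdvd))
      (fun h => hnd ((Nat.dvd_mod_iff (dvd_pow_self b hek)).mp h))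
    have hlarge : b ^ e k ≤ N := hlt.le.trans (Nat.le_of_dvd (Nat.pos_of_ne_zero hN) hNdvd)
    exact Nat.succ_le_of_lt (hrest.trans_lt (countNonzeroDigits_mod_pow_lt hb hlarge))

theorem stmt_2 (a b : ℕ) (ha : 2 ≤ a) (hab : a < b) (hdvd : a ∣ b)
    (e : ℕ → ℕ) (he1 : 1 ≤ e 1)
    (hstep : ∀ k ≥ 2, a ^ e k > b ^ e (k - 1))
    (N : ℕ) (hN : 0 < N) (k : ℕ) (hk : 1 ≤ k)
    (hNdvd : a ^ e k ∣ N) (hnd : ¬ (b ∣ N)) :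
    countNonzeroDigits b N ≥ k :=
  stmt_2_general a b ha hab hdvd e he1 hstep N k hNdvd hnd
end

section
/- Let b ≥ 2 and r ≥ 1 be integers, and let n be an integer with n ≥ b^r − 1. Then the sum of the base-b digits of n! satisfies s_b(n!) ≥ (b−1)·r. -/
/-!
Since `b ^ r - 1 ∣ n!`, it suffices that every positive multiple `N` of `b ^ r - 1` has base-`b`
digit sum at least `(b - 1) * r`. Split `N = s + b ^ r * q` with `s < b ^ r`: the digits of `N`
are those of `s` followed by those of `q`, while `q + s ≡ N [MOD b ^ r - 1]` is a smaller
multiple. By subadditivity of the digit sum, `s_b(N) = s_b(s) + s_b(q) ≥ s_b(q + s)`, so by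
descent we reach `b ^ r - 1` itself, whose digit sum is `(b - 1) * r`.
-/

open Finset

namespace Nat

variable {b : ℕ}

theorem sub_one_mul_sum_div_pow_eq_sub_digits_sum (hb : 1 < b) {n K : ℕ} (hK : n < b ^ K) :
    (b - 1) * ∑ i ∈ range K, n / b ^ (i + 1) = n - (b.digits n).sum := by
  rcases eq_or_ne n 0 with rfl | hn
  · simp
  rw [← sub_one_mul_sum_log_div_pow_eq_sub_sum_digits n]
  congr 1
  refine (sum_subset (range_subset_range.mpr (log_lt_of_lt_pow hn hK)) fun i _ hi => ?_).symm
  refine div_eq_of_lt ((lt_pow_succ_log_self hb n).trans_le (pow_le_pow_right₀ hb.le ?_))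
  simp only [mem_range, not_lt] at hi
  omega

/-- Subadditivity: `s_b(x) + s_b(y) - s_b(x + y)` is `b - 1` times the number of carries. -/
theorem digits_sum_add_le (hb : 1 < b) (x y : ℕ) :
    (b.digits (x + y)).sum ≤ (b.digits x).sum + (b.digits y).sum := by
  have hxy : x + y < b ^ (x + y) := Nat.lt_pow_self hb
  have hcarries : ∑ i ∈ range (x + y), (x / b ^ (i + 1) + y / b ^ (i + 1)) ≤
      ∑ i ∈ range (x + y), (x + y) / b ^ (i + 1) :=
    sum_le_sum fun i _ => Nat.div_add_div_le_add_div
  have h := Nat.mul_le_mul_left (b - 1) hcarries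
  rw [sum_add_distrib, mul_add, sub_one_mul_sum_div_pow_eq_sub_digits_sum hb hxy,
    sub_one_mul_sum_div_pow_eq_sub_digits_sum hb (by omega : x < b ^ (x + y)),
    sub_one_mul_sum_div_pow_eq_sub_digits_sum hb (by omega : y < b ^ (x + y))] at h
  have := digit_sum_le b x
  have := digit_sum_le b y
  have := digit_sum_le b (x + y)
  omega

theorem digits_sum_add_base_pow_mul (hb : 1 < b) {s k : ℕ} (hs : s < b ^ k) (q : ℕ) :
    (b.digits (s + b ^ k * q)).sum = (b.digits s).sum + (b.digits q).sum := by
  rcases eq_or_ne q 0 with rfl | hq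
  · simp
  have hlen : (b.digits s).length ≤ k := (digits_length_le_iff hb s).mpr hs
  rw [← Nat.add_sub_cancel' hlen, ← digits_append_zeroes_append_digits hb (pos_of_ne_zero hq)]
  simp

theorem digits_sum_base_pow_sub_one (hb : 1 < b) (r : ℕ) :
    (b.digits (b ^ r - 1)).sum = (b - 1) * r := by
  induction r with
  | zero => simp
  | succ r ih =>
    have hpow : b ^ r - 1 < b ^ r := sub_lt (pow_pos (by omega) r) one_pos
    have hsplit : b ^ (r + 1) - 1 = (b ^ r - 1) + b ^ r * (b - 1) := by
      have := pow_le_pow_right₀ (by omega : 1 ≤ b) (by omega : r ≤ r + 1)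
      rw [Nat.mul_sub, mul_one, ← pow_succ]
      omega
    rw [hsplit, digits_sum_add_base_pow_mul hb hpow, ih, digits_of_lt b _ (by omega) (by omega)]
    simp [Nat.mul_succ]

theorem sub_one_mul_le_digits_sum_of_dvd (hb : 1 < b) {r N : ℕ} (hN : N ≠ 0)
    (hdvd : b ^ r - 1 ∣ N) : (b - 1) * r ≤ (b.digits N).sum := by
  rcases eq_or_ne r 0 with rfl | hr
  · simp
  have hbr : 1 < b ^ r := one_lt_pow hr hb
  induction N using Nat.strong_induction_on with
  | _ N ih =>
  rcases lt_or_ge N (b ^ r) with hlt | hge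
  · rw [eq_of_dvd_of_lt_two_mul hN hdvd (by omega), digits_sum_base_pow_sub_one hb]
  set q := N / b ^ r
  set s := N % b ^ r
  have hNqs : N = s + b ^ r * q := (mod_add_div N (b ^ r)).symm
  have hq : 0 < q := div_pos hge (by omega)
  have hs : s < b ^ r := mod_lt N (by omega)
  clear_value q s
  have hfold : N = (q + s) + (b ^ r - 1) * q := by
    rw [Nat.sub_mul, one_mul]
    have := Nat.le_mul_of_pos_left q (by omega : 0 < b ^ r)
    omega
  have hdvd' : b ^ r - 1 ∣ q + s := (Nat.dvd_add_left (dvd_mul_right _ q)).mp (hfold ▸ hdvd)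
  have hlt : q + s < N := by
    have := lt_mul_of_one_lt_left hq hbr
    omega
  calc (b - 1) * r ≤ (b.digits (q + s)).sum := ih _ hlt (by omega) hdvd'
    _ ≤ (b.digits q).sum + (b.digits s).sum := digits_sum_add_le hb q s
    _ = (b.digits N).sum := by rw [hNqs, digits_sum_add_base_pow_mul hb hs, add_comm]

end Nat

theorem stmt_8_general (b r n : ℕ) (hb : 2 ≤ b)
    (hn : n ≥ b ^ r - 1) :
    (Nat.digits b (Nat.factorial n)).sum ≥ (b - 1) * r := by
  rcases eq_or_ne r 0 with rfl | hr
  · simp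
  have hbr : 1 < b ^ r := Nat.one_lt_pow hr hb
  exact Nat.sub_one_mul_le_digits_sum_of_dvd hb (Nat.factorial_ne_zero n)
    (Nat.dvd_factorial (by omega) hn)

theorem stmt_8 (b r n : ℕ) (hb : 2 ≤ b) (hr : 1 ≤ r)
    (hn : n ≥ b ^ r - 1) :
    (Nat.digits b (Nat.factorial n)).sum ≥ (b - 1) * r :=
  stmt_8_general b r n hb hn
end
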